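/- arXiv:2307.09533 — 2 statements merged into one kernel-verified Lean document; each statement's English description precedes it below -/
import Mathlib

section
/- Let G be a d-regular bipartite graph with parts X and Y of size n, and let t be a positive integer with t \le d/2. Then every nonempty closed t-contracting set A \subseteq X satisfies |A| > d - t \ge d/2. Consequently, every A \subseteq X all of whose 2-linked components are closed and t-contracting has at most 2n/d components. -/
open scoped Classical

noncomputable section

variable {V : Type*}

/-- The square of a graph: vertices at distance 1 or 2 are adjacent. -/
def gsq (G : SimpleGraph V) : SimpleGraph V where
  Adj u v := u ≠ v ∧ (G.Adj u v ∨ ∃ w, G.Adj u w ∧ G.Adj w v)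
  symm := by
    constructor
    rintro u v ⟨h1, h2⟩
    refine ⟨h1.symm, ?_⟩
    rcases h2 with h | ⟨w, hw1, hw2⟩
    · exact Or.inl h.symm
    · exact Or.inr ⟨w, hw2.symm, hw1.symm⟩
  loopless := by constructor; rintro u ⟨h, -⟩; exact h rfl

/-- `A` is 2-linked: the subgraph of the square of `G` induced on `A` is connected. -/
def TwoLinked (G : SimpleGraph V) (A : Finset V) : Prop :=
  ((gsq G).induce (A : Set V)).Connected

variable [Fintype V] [DecidableEq V]

/-- The neighborhood of a vertex, as a `Finset`. -/
def nbrF (G : SimpleGraph V) (v : V) : Finset V :=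
  Finset.univ.filter (fun u => G.Adj v u)

/-- The neighborhood `N(A)` of a set of vertices. -/
def nbr (G : SimpleGraph V) (A : Finset V) : Finset V :=
  Finset.univ.filter (fun u => ∃ a ∈ A, G.Adj a u)

/-- The closure `[A] = {x ∈ X : N(x) ⊆ N(A)}` of `A` within the part `X`. -/
def cl (G : SimpleGraph V) (X A : Finset V) : Finset V :=
  X.filter (fun x => nbrF G x ⊆ nbr G A)

/-- `A` is closed (within the part `X`) if `[A] = A`. -/
def IsClosedSet (G : SimpleGraph V) (X A : Finset V) : Prop :=
  cl G X A = A

/-- The 2-linked components of `A`: equivalence classes of the reachability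
relation in the square of `G` restricted to `A`. -/
def comps (G : SimpleGraph V) (A : Finset V) : Finset (Finset V) :=
  A.image (fun a =>
    A.filter (fun b => Relation.ReflTransGen
      (fun u v => (gsq G).Adj u v ∧ u ∈ A ∧ v ∈ A) a b))

/-- The number of independent sets of `G` (including the empty set). -/
def numInd (G : SimpleGraph V) : ℕ :=
  (Finset.univ.filter (fun s : Finset V => ∀ u ∈ s, ∀ v ∈ s, ¬ G.Adj u v)).card

/-- `A ⊆ X` is `t`-contracting if `|N(A)| < |[A]| + t`. -/
def Contracting (G : SimpleGraph V) (X : Finset V) (t : ℤ) (A : Finset V) : Prop :=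
  ((nbr G A).card : ℤ) < ((cl G X A).card : ℤ) + t

/-- `D_A`: product over the 2-linked components `A'` of `A` of the number of
2-linked `B ⊆ A'` with `N(B) = N(A')`. -/
def DA (G : SimpleGraph V) (A : Finset V) : ℕ :=
  ∏ A' ∈ comps G A,
    (A'.powerset.filter (fun B => TwoLinked G B ∧ nbr G B = nbr G A')).card

/-- The value `|∇(C)|` of the cut `C`: the number of edges with exactly one
endpoint in `C`. -/
def cutVal (G : SimpleGraph V) (C : Finset V) : ℕ :=
  ∑ u ∈ C, (nbrF G u \ C).card

/-- `B` is a polymer of `P_A` (a nonempty 2-linked subset of `X_A = X \ N²(A)`)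
that is not `t0`-contracting. -/
def IsPolymerIn (G : SimpleGraph V) (X : Finset V) (t0 : ℤ) (A B : Finset V) : Prop :=
  B.Nonempty ∧ TwoLinked G B ∧ B ⊆ X \ nbr G (nbr G A) ∧ ¬ Contracting G X t0 B

/-- `Ξ_A`: sum over unordered compatible collections of non-`t0`-contracting
polymers from `P_A` of `2^{-∑|N(B_i)|}`. -/
def Xi (G : SimpleGraph V) (X : Finset V) (t0 : ℤ) (A : Finset V) : ℝ :=
  ∑ F ∈ Finset.univ.filter (fun F : Finset (Finset V) =>
      (∀ B ∈ F, IsPolymerIn G X t0 A B) ∧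
      (∀ B ∈ F, ∀ B' ∈ F, B ≠ B' → Disjoint (nbr G B) (nbr G B'))),
    ∏ B ∈ F, ((2:ℝ) ^ (nbr G B).card)⁻¹

/-- `𝒢(w,t)`: polymers `B ⊆ X` with `|N(B)| = w` and `|N(B)| - |[B]| = t`. -/
def GG (G : SimpleGraph V) (X : Finset V) (w t : ℤ) : Finset (Finset V) :=
  X.powerset.filter (fun B => B.Nonempty ∧ TwoLinked G B ∧
    ((nbr G B).card : ℤ) = w ∧ ((nbr G B).card : ℤ) - ((cl G X B).card : ℤ) = t)

/-- `G` is bipartite with parts `X` and `Y`. -/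
def IsBipartiteWith (G : SimpleGraph V) (X Y : Finset V) : Prop :=
  Disjoint X Y ∧ X ∪ Y = Finset.univ ∧
    ∀ u v, G.Adj u v → (u ∈ X ∧ v ∈ Y) ∨ (u ∈ Y ∧ v ∈ X)

/-- `G` is `d`-regular. -/
def IsRegularDeg (G : SimpleGraph V) (d : ℕ) : Prop :=
  ∀ v, (nbrF G v).card = d

/-- `d_S(v)`: number of neighbors of `v` in `S`. -/
def degIn (G : SimpleGraph V) (v : V) (S : Finset V) : ℕ := (nbrF G v ∩ S).card

/-- `W_{d/2}`: vertices of `N(A)` with at least `d/2` neighbors in `A`. -/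
def Wbig (G : SimpleGraph V) (d : ℕ) (A : Finset V) : Finset V :=
  (nbr G A).filter (fun y => (d : ℝ) / 2 ≤ (degIn G y A : ℝ))

/-- `F` is an essential set for `A`: `N(A) ⊇ F ⊇ W_{d/2}` and `N(F) ⊇ [A]`. -/
def EssentialSet (G : SimpleGraph V) (X : Finset V) (d : ℕ) (A F : Finset V) : Prop :=
  F ⊆ nbr G A ∧ Wbig G d A ⊆ F ∧ cl G X A ⊆ nbr G F

/-- `(S,T)` is a `γ'`-container for `A`, where `t = |N(A)| - |[A]|`. -/
def IsContainer (G : SimpleGraph V) (X Y : Finset V) (d : ℕ) (γ' : ℝ)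
    (A S T : Finset V) : Prop :=
  cl G X A ⊆ S ∧ Wbig G d A ⊆ T ∧ T ⊆ nbr G A ∧
  (∀ v ∈ S, (degIn G v (Y \ T) : ℝ) ≤
      γ' * (((nbr G A).card : ℝ) - ((cl G X A).card : ℝ))) ∧
  (∀ v ∈ Y \ T, (degIn G v S : ℝ) ≤
      γ' * (((nbr G A).card : ℝ) - ((cl G X A).card : ℝ)))

/-
A closed set `A` equals its closure, so being `t`-contracting says `|N(A)| < |A| + t`; since
`N(A)` contains the `d` neighbours of any single vertex of `A`, this forces `|A| > d - t ≥ d/2`.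
The 2-linked components of `A ⊆ X` are disjoint subsets of `X`, each of size more than `d/2`
when closed and `t`-contracting, so there are at most `|X| / (d/2) = 2n/d` of them.
-/

end

open Finset

section Closure

variable {V : Type*} [Fintype V] (G : SimpleGraph V) (X : Finset V)

lemma nbrF_subset_nbr {A : Finset V} {x : V} (hx : x ∈ A) : nbrF G x ⊆ nbr G A := by
  intro u hu
  simp only [nbrF, nbr, mem_filter, mem_univ, true_and] at hu ⊢
  exact ⟨x, hx, hu⟩

lemma lt_card_add_of_isClosedSet_of_contracting [DecidableEq V] {d t : ℕ}
    (hreg : IsRegularDeg G d) {A : Finset V} (hA : A.Nonempty) (hcl : IsClosedSet G X A)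
    (hc : Contracting G X (t : ℤ) A) : d < #A + t := by
  obtain ⟨x, hx⟩ := hA
  have hd : d ≤ #(nbr G A) := hreg x ▸ card_le_card (nbrF_subset_nbr G hx)
  rw [Contracting, hcl] at hc
  omega

end Closure

section Components

variable {V : Type*} [DecidableEq V] (G : SimpleGraph V) (A : Finset V)

def LinkedIn (u v : V) : Prop := (gsq G).Adj u v ∧ u ∈ A ∧ v ∈ A

instance : Std.Symm (LinkedIn G A) where
  symm _ _ h := ⟨h.1.symm, h.2.2, h.2.1⟩

lemma comps_eq_image :
    comps G A = A.image (fun a => A.filter (Relation.ReflTransGen (LinkedIn G A) a)) := rfl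

variable {G A}

lemma nonempty_of_mem_comps {A' : Finset V} (h : A' ∈ comps G A) : A'.Nonempty := by
  obtain ⟨a, ha, rfl⟩ := mem_image.1 h
  exact ⟨a, mem_filter.2 ⟨ha, .refl⟩⟩

lemma subset_of_mem_comps {A' : Finset V} (h : A' ∈ comps G A) : A' ⊆ A := by
  obtain ⟨a, -, rfl⟩ := mem_image.1 h
  exact filter_subset _ _

lemma pairwiseDisjoint_comps : (comps G A : Set (Finset V)).PairwiseDisjoint id := by
  rw [comps_eq_image]
  rintro _ h₁ _ h₂ hne
  obtain ⟨a₁, -, rfl⟩ := mem_image.1 h₁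
  obtain ⟨a₂, -, rfl⟩ := mem_image.1 h₂
  refine disjoint_left.2 fun b hb₁ hb₂ => hne ?_
  have h₁₂ : Relation.ReflTransGen (LinkedIn G A) a₁ a₂ :=
    (mem_filter.1 hb₁).2.trans (symm (mem_filter.1 hb₂).2)
  ext c
  simp only [mem_filter]
  exact and_congr_right fun _ => ⟨(symm h₁₂).trans, h₁₂.trans⟩

lemma sum_card_comps_le : ∑ A' ∈ comps G A, #A' ≤ #A :=
  calc ∑ A' ∈ comps G A, #A' = #((comps G A).biUnion id) :=
        (card_biUnion pairwiseDisjoint_comps).symm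
    _ ≤ #A := card_le_card (biUnion_subset.2 fun _ h => subset_of_mem_comps h)

end Components

variable {V : Type*} [Fintype V] [DecidableEq V]

theorem stmt_11_general (G : SimpleGraph V) (X : Finset V) (n d : ℕ)
    (hX : X.card = n)
    (hreg : IsRegularDeg G d)
    (t : ℕ) (ht : 0 < t) (htd : 2 * t ≤ d) :
    (∀ A ⊆ X, A.Nonempty → IsClosedSet G X A → Contracting G X (t : ℤ) A →
      (d : ℝ) - t < A.card ∧ (d : ℝ) / 2 ≤ (d : ℝ) - t) ∧
    (∀ A ⊆ X, (∀ A' ∈ comps G A,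
        IsClosedSet G X A' ∧ Contracting G X (t : ℤ) A') →
      ((comps G A).card : ℝ) ≤ 2 * n / d) := by
  refine ⟨fun A _ hA hcl hc => ?_, fun A hAX hcomp => ?_⟩
  · have hlt : (d : ℝ) < #A + t := by
      exact_mod_cast lt_card_add_of_isClosedSet_of_contracting G X hreg hA hcl hc
    have htd' : (2 * t : ℝ) ≤ d := by exact_mod_cast htd
    constructor <;> linarith
  · have hcomp_card : ∀ A' ∈ comps G A, d ≤ 2 * #A' := fun A' hA' => by
      have := lt_card_add_of_isClosedSet_of_contracting G X hreg
        (nonempty_of_mem_comps hA') (hcomp A' hA').1 (hcomp A' hA').2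
      omega
    have hcount : #(comps G A) * d ≤ 2 * n :=
      calc #(comps G A) * d ≤ ∑ A' ∈ comps G A, 2 * #A' := by
            simpa using card_nsmul_le_sum _ _ _ hcomp_card
        _ ≤ 2 * #A := by rw [← mul_sum]; exact Nat.mul_le_mul_left 2 sum_card_comps_le
        _ ≤ 2 * n := Nat.mul_le_mul_left 2 (hX ▸ card_le_card hAX)
    rw [le_div_iff₀ (by exact_mod_cast (by omega : 0 < d))]
    exact_mod_cast hcount

/-- for `0 < t ≤ d/2`, every nonempty closed `t`-contracting
`A ⊆ X` satisfies `|A| > d - t ≥ d/2`; consequently every `A ⊆ X` all of whose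
2-linked components are closed and `t`-contracting has at most `2n/d`
components. -/
theorem stmt_11 (G : SimpleGraph V) (X Y : Finset V) (n d : ℕ)
    (hX : X.card = n) (hY : Y.card = n)
    (hbip : IsBipartiteWith G X Y) (hreg : IsRegularDeg G d)
    (t : ℕ) (ht : 0 < t) (htd : 2 * t ≤ d) :
    (∀ A ⊆ X, A.Nonempty → IsClosedSet G X A → Contracting G X (t : ℤ) A →
      (d : ℝ) - t < A.card ∧ (d : ℝ) / 2 ≤ (d : ℝ) - t) ∧
    (∀ A ⊆ X, (∀ A' ∈ comps G A,
        IsClosedSet G X A' ∧ Contracting G X (t : ℤ) A') →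
      ((comps G A).card : ℝ) ≤ 2 * n / d) :=
  stmt_11_general G X n d hX hreg t ht htd
end

section
/- For each \delta \in (0,1) and each \gamma' > 0 there is a constant K = K(\delta,\gamma') such that for all sufficiently large n the following holds. Let d = \lfloor\delta n\rfloor and let G be a d-regular bipartite graph with parts X and Y of size n. Then for every set F \subseteq Y there is a family \mathcal{C} \subseteq 2^X \times 2^Y with |\mathcal{C}| \le n^{K} such that every A \subseteq X with |N(A)| - |[A]| \le \log^4 n for which F is an essential set has a \gamma'-container in \mathcal{C}. -/
open scoped Classical

noncomputable section

variable {V : Type*}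

variable [Fintype V] [DecidableEq V]

/-!
Write `C = [A]`, `W = N(A)` and `t = |W| - |C|`. Every vertex of `C` has all of its `d`
neighbours in `W`, so exactly `d t` edges join `W` to vertices outside `C`. This one count
bounds both the vertices of `W` with few neighbours in `C` and the vertices outside `C` with
few neighbours outside a set `T ⊆ W`; as `t ≤ log⁴ n` is negligible against `d ≈ δ n`, both
kinds are rare.

The container is built from `F` in rounds. Greedily adding the neighbourhoods of `p = O(δ⁻²)`
vertices of `C` covers all of `W` but `d/2` vertices; the vertices with more than `2t`
neighbours among those having at most `d/2` neighbours outside the current `T` then leave at most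
`t + 1` vertices of `W` uncovered; `q = O(1/γ')` more neighbourhoods of vertices of `C` make
every vertex of `C` have at most `γ' t` neighbours outside `T`, and deleting the neighbourhoods
of `q` vertices of `Y ∖ W` prunes `S`. Each container is determined by `t` and three sets of at
most `p + q` vertices, hence there are at most `n^K` of them.
-/

open Finset

set_option linter.unusedSectionVars false

section Neighbourhoods

variable {G : SimpleGraph V} {X Y A : Finset V} {d : ℕ}

theorem mem_nbrF {v u : V} : u ∈ nbrF G v ↔ G.Adj v u := by
  simp [nbrF]

theorem mem_nbr {u : V} : u ∈ nbr G A ↔ ∃ a ∈ A, G.Adj a u := by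
  simp [nbr]

theorem mem_nbrF_comm {v u : V} : u ∈ nbrF G v ↔ v ∈ nbrF G u := by
  rw [mem_nbrF, mem_nbrF, G.adj_comm]

theorem cl_subset : cl G X A ⊆ X :=
  filter_subset _ _

theorem nbrF_subset_nbr_of_mem_cl {x : V} (hx : x ∈ cl G X A) : nbrF G x ⊆ nbr G A :=
  (mem_filter.1 hx).2

theorem biUnion_nbrF_subset_nbr {L : Finset V} (hL : L ⊆ cl G X A) :
    L.biUnion (nbrF G) ⊆ nbr G A :=
  biUnion_subset.2 fun _ hx => nbrF_subset_nbr_of_mem_cl (hL hx)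

theorem disjoint_nbrF_cl {y : V} (hy : y ∉ nbr G A) : Disjoint (nbrF G y) (cl G X A) :=
  disjoint_left.2 fun _ hxy hx => hy (nbrF_subset_nbr_of_mem_cl hx (mem_nbrF_comm.1 hxy))

theorem nbr_subset_of_isBipartiteWith (hbip : IsBipartiteWith G X Y) (hA : A ⊆ X) :
    nbr G A ⊆ Y := by
  intro y hy
  obtain ⟨a, ha, hay⟩ := mem_nbr.1 hy
  rcases hbip.2.2 a y hay with ⟨-, h⟩ | ⟨h, -⟩
  · exact h
  · exact absurd (hA ha) (disjoint_right.1 hbip.1 h)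

theorem sum_card_nbrF_inter_comm (G : SimpleGraph V) (s t : Finset V) :
    ∑ x ∈ s, #(nbrF G x ∩ t) = ∑ y ∈ t, #(nbrF G y ∩ s) := by
  have h : ∀ x u, nbrF G x ∩ u = u.bipartiteAbove G.Adj x := fun x u => by
    ext
    simp [bipartiteAbove, mem_nbrF, and_comm]
  simp_rw [h]
  rw [sum_card_bipartiteAbove_eq_sum_card_bipartiteBelow]
  exact sum_congr rfl fun y _ => congrArg card (filter_congr fun x _ => G.adj_comm x y)

theorem card_nbrF_sdiff_add_card_nbrF_inter (hreg : IsRegularDeg G d) (v : V) (s : Finset V) :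
    (#(nbrF G v \ s) : ℝ) + #(nbrF G v ∩ s) = d := by
  exact_mod_cast (card_sdiff_add_card_inter _ _).trans (hreg v)

end Neighbourhoods

/-- The paper's `t`. -/
def nbrExcess (G : SimpleGraph V) (X A : Finset V) : ℝ :=
  #(nbr G A) - #(cl G X A)

section Excess

variable {G : SimpleGraph V} {X A S T : Finset V} {d : ℕ}

/-- Each vertex of `[A]` sends all of its `d` edges into `N(A)`. -/
theorem sum_card_nbrF_sdiff_cl (hreg : IsRegularDeg G d) :
    ∑ y ∈ nbr G A, (#(nbrF G y \ cl G X A) : ℝ) = d * nbrExcess G X A := by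
  have hC : ∑ y ∈ nbr G A, #(nbrF G y ∩ cl G X A) = #(cl G X A) * d := by
    rw [← sum_card_nbrF_inter_comm, ← smul_eq_mul, ← sum_const]
    exact sum_congr rfl fun x hx => by
      rw [inter_eq_left.2 (nbrF_subset_nbr_of_mem_cl hx), hreg x]
  have hC' : ∑ y ∈ nbr G A, (#(nbrF G y ∩ cl G X A) : ℝ) = #(cl G X A) * d := by
    exact_mod_cast hC
  have hsum := sum_congr rfl fun y (_ : y ∈ nbr G A) =>
    card_nbrF_sdiff_add_card_nbrF_inter (s := cl G X A) hreg y
  rw [sum_add_distrib, hC', sum_const, nsmul_eq_mul] at hsum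
  rw [nbrExcess]
  linarith

theorem nbrExcess_nonneg (hreg : IsRegularDeg G d) (hd : 0 < d) : 0 ≤ nbrExcess G X A := by
  have h : 0 ≤ (d : ℝ) * nbrExcess G X A :=
    sum_card_nbrF_sdiff_cl (X := X) (A := A) hreg ▸ sum_nonneg fun _ _ => by positivity
  exact nonneg_of_mul_nonneg_right h (by exact_mod_cast hd)

theorem mul_sub_nbrExcess_le_sum_card_inter_cl (hreg : IsRegularDeg G d) {U : Finset V}
    (hU : U ⊆ nbr G A) :
    d * (#U - nbrExcess G X A) ≤ ∑ y ∈ U, (#(nbrF G y ∩ cl G X A) : ℝ) := by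
  have hle : ∑ y ∈ U, (#(nbrF G y \ cl G X A) : ℝ) ≤ d * nbrExcess G X A :=
    (sum_le_sum_of_subset_of_nonneg hU fun _ _ _ => by positivity).trans_eq
      (sum_card_nbrF_sdiff_cl hreg)
  have hsum := sum_congr rfl fun y (_ : y ∈ U) =>
    card_nbrF_sdiff_add_card_nbrF_inter (s := cl G X A) hreg y
  rw [sum_add_distrib, sum_const, nsmul_eq_mul] at hsum
  linarith

theorem card_mul_sub_le_of_card_inter_cl_le (hreg : IsRegularDeg G d) {B : Finset V}
    (hB : B ⊆ nbr G A) {θ : ℝ} (h : ∀ y ∈ B, (#(nbrF G y ∩ cl G X A) : ℝ) ≤ θ) :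
    #B * (d - θ) ≤ d * nbrExcess G X A := by
  have hlow := mul_sub_nbrExcess_le_sum_card_inter_cl (X := X) hreg hB
  have hup := sum_le_card_nsmul B _ θ h
  rw [nsmul_eq_mul] at hup
  linarith

/-- A vertex outside `[A]` with at most `θ` neighbours outside `T ⊆ N(A)` is the endpoint of
at least `d - θ` of the `d t` edges counted in `sum_card_nbrF_sdiff_cl`. -/
theorem card_sdiff_cl_mul_sub_le (hreg : IsRegularDeg G d) (hT : T ⊆ nbr G A) {θ : ℝ}
    (hS : ∀ x ∈ S, (#(nbrF G x \ T) : ℝ) ≤ θ) :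
    #(S \ cl G X A) * (d - θ) ≤ d * nbrExcess G X A := by
  have hpt : ∀ x ∈ S \ cl G X A, (d : ℝ) - θ ≤ #(nbrF G x ∩ nbr G A) := fun x hx => by
    have h1 : (#(nbrF G x \ nbr G A) : ℝ) ≤ #(nbrF G x \ T) := by
      exact_mod_cast card_le_card (sdiff_subset_sdiff subset_rfl hT)
    linarith [card_nbrF_sdiff_add_card_nbrF_inter hreg x (nbr G A), hS x (mem_sdiff.1 hx).1]
  calc #(S \ cl G X A) * ((d : ℝ) - θ)
      ≤ ∑ x ∈ S \ cl G X A, (#(nbrF G x ∩ nbr G A) : ℝ) := by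
        simpa [nsmul_eq_mul] using card_nsmul_le_sum _ _ _ hpt
    _ = ∑ y ∈ nbr G A, (#(nbrF G y ∩ (S \ cl G X A)) : ℝ) := by
        exact_mod_cast sum_card_nbrF_inter_comm G _ _
    _ ≤ ∑ y ∈ nbr G A, (#(nbrF G y \ cl G X A) : ℝ) := sum_le_sum fun y _ => by
        exact_mod_cast card_le_card fun u hu =>
          mem_sdiff.2 ⟨(mem_inter.1 hu).1, (mem_sdiff.1 (mem_inter.1 hu).2).2⟩
    _ = d * nbrExcess G X A := sum_card_nbrF_sdiff_cl hreg

end Excess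

/-- Each step covers at least `c` new points of `R`, so fewer than `#R / c` steps are taken. -/
theorem exists_card_le_of_greedy {α β : Type*} [DecidableEq α] [DecidableEq β]
    (N : α → Finset β) (R : Finset β) (s : Finset α) (P : Finset α → Prop) {c : ℝ}
    {m : ℕ} (hm : (#R : ℝ) < m * c)
    (step : ∀ L ⊆ s, ¬ P L → ∃ x ∈ s, c ≤ #(N x ∩ (R \ L.biUnion N))) :
    ∃ L ⊆ s, #L ≤ m ∧ P L := by
  have key : ∀ k : ℕ, ∃ L ⊆ s, #L ≤ k ∧
      (P L ∨ (#(R \ L.biUnion N) : ℝ) + k * c ≤ #R) := by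
    intro k
    induction k with
    | zero => exact ⟨∅, empty_subset _, le_rfl, Or.inr (by simp)⟩
    | succ k ih =>
      obtain ⟨L, hLs, hLk, hL⟩ := ih
      by_cases hP : P L
      · exact ⟨L, hLs, hLk.trans k.le_succ, Or.inl hP⟩
      obtain ⟨x, hxs, hx⟩ := step L hLs hP
      refine ⟨insert x L, insert_subset hxs hLs, (card_insert_le _ _).trans (by omega),
        Or.inr ?_⟩
      have hsplit : (#(R \ (insert x L).biUnion N) : ℝ) + #(N x ∩ (R \ L.biUnion N))
          = #(R \ L.biUnion N) := by
        rw [biUnion_insert, union_comm, sdiff_union_distrib, ← Finset.sdiff_sdiff_left',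
          inter_comm]
        exact_mod_cast card_sdiff_add_card_inter _ _
      push_cast
      linarith [hL.resolve_left hP]
  obtain ⟨L, hLs, hLm, hL⟩ := key m
  refine ⟨L, hLs, hLm, hL.resolve_right fun h => ?_⟩
  linarith [(by positivity : (0 : ℝ) ≤ #(R \ L.biUnion N))]

theorem max_one_le_of_lt_natCast {θ : ℝ} (hθ : 0 ≤ θ) {k : ℕ} (h : θ < k) :
    max θ 1 ≤ k :=
  max_le h.le (by exact_mod_cast Nat.one_le_iff_ne_zero.2 fun hk => by simp [hk] at h; linarith)

theorem add_one_lt_mul_max {γ' t : ℝ} (hγ' : 0 < γ') {q : ℕ} (hq : 1 / γ' + 2 ≤ q) :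
    t + 1 < q * max (γ' * t) 1 := by
  rcases le_total 1 (γ' * t) with h | h
  · rw [max_eq_left h]
    have : 1 / γ' * (γ' * t) = t := by field_simp
    nlinarith
  · rw [max_eq_right h]
    have : t ≤ 1 / γ' := by rw [le_div_iff₀ hγ']; linarith
    linarith

def fewNbrsOutside (G : SimpleGraph V) (X T : Finset V) (θ : ℝ) : Finset V :=
  X.filter fun x => (#(nbrF G x \ T) : ℝ) ≤ θ

def manyNbrsIn (G : SimpleGraph V) (Y S : Finset V) (θ : ℝ) : Finset V :=
  Y.filter fun y => θ < #(nbrF G y ∩ S)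

/-- `t` stands for a guess of `nbrExcess G X A`. -/
def thinnedT (G : SimpleGraph V) (X Y F : Finset V) (d t : ℕ) (L₁ L₂ : Finset V) :
    Finset V :=
  let T₀ := F ∪ L₁.biUnion (nbrF G)
  T₀ ∪ manyNbrsIn G Y (fewNbrsOutside G X T₀ (d / 2)) (2 * t) ∪ L₂.biUnion (nbrF G)

def prunedContainer (G : SimpleGraph V) (X Y T : Finset V) (θ : ℝ) (L : Finset V) :
    Finset V × Finset V :=
  let S := fewNbrsOutside G X T θ \ L.biUnion (nbrF G)
  (S, T ∪ manyNbrsIn G Y S θ)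

section Construction

variable {G : SimpleGraph V} {X Y A S T : Finset V} {d : ℕ}

theorem exists_mem_cl_le_card_nbrF_inter (hreg : IsRegularDeg G d) (hd : 0 < d) {n : ℕ}
    (hn : 0 < n) (hC : #(cl G X A) ≤ n) (ht : 4 * nbrExcess G X A ≤ d) {U : Finset V}
    (hU : U ⊆ nbr G A) (hUd : (d : ℝ) / 2 < #U) :
    ∃ x ∈ cl G X A, (d : ℝ) ^ 2 / (4 * n) ≤ #(nbrF G x ∩ U) := by
  have hdR : (0 : ℝ) < d := by exact_mod_cast hd
  by_contra! hsmall
  have hedges := mul_sub_nbrExcess_le_sum_card_inter_cl (X := X) hreg hU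
  have hup := sum_le_card_nsmul (cl G X A) _ _ fun x hx => (hsmall x hx).le
  rw [nsmul_eq_mul] at hup
  have hCn : (#(cl G X A) : ℝ) ≤ n := by exact_mod_cast hC
  have hn4 : (n : ℝ) * (d ^ 2 / (4 * n)) = d ^ 2 / 4 := by field_simp
  have := calc (d : ℝ) ^ 2 / 4
      < d * (#U - nbrExcess G X A) := by nlinarith
    _ ≤ ∑ y ∈ U, (#(nbrF G y ∩ cl G X A) : ℝ) := hedges
    _ = ∑ x ∈ cl G X A, (#(nbrF G x ∩ U) : ℝ) := by
        exact_mod_cast (sum_card_nbrF_inter_comm G _ _).symm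
    _ ≤ n * (d ^ 2 / (4 * n)) := hup.trans (by gcongr)
  linarith

theorem exists_card_nbr_sdiff_biUnion_le (hreg : IsRegularDeg G d) {n p : ℕ} (hn : 0 < n)
    (hW : #(nbr G A) ≤ n) (hC : #(cl G X A) ≤ n) (ht : 4 * nbrExcess G X A ≤ d)
    (hp : 4 * n ^ 2 < p * d ^ 2) :
    ∃ L ⊆ cl G X A, #L ≤ p ∧ (#(nbr G A \ L.biUnion (nbrF G)) : ℝ) ≤ d / 2 := by
  have hd : 0 < d := Nat.pos_of_ne_zero fun h => by simp [h] at hp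
  have hnR : (0 : ℝ) < n := by exact_mod_cast hn
  have hp' : (4 * n ^ 2 : ℝ) < p * d ^ 2 := by exact_mod_cast hp
  refine exists_card_le_of_greedy (nbrF G) (nbr G A) _ _ (c := d ^ 2 / (4 * n)) ?_
    fun L _ hL => exists_mem_cl_le_card_nbrF_inter hreg hd hn hC ht sdiff_subset (not_le.1 hL)
  calc (#(nbr G A) : ℝ) ≤ n := by exact_mod_cast hW
    _ < p * (d ^ 2 / (4 * n)) := by
      rw [mul_div_assoc', lt_div_iff₀ (by positivity)]
      nlinarith

theorem manyNbrsIn_subset_nbr {θ : ℝ} (hS : (#(S \ cl G X A) : ℝ) ≤ θ) :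
    manyNbrsIn G Y S θ ⊆ nbr G A := by
  intro y hy
  by_contra hyW
  have hsub : nbrF G y ∩ S ⊆ S \ cl G X A := fun u hu =>
    mem_sdiff.2 ⟨(mem_inter.1 hu).2, disjoint_left.1 (disjoint_nbrF_cl hyW) (mem_inter.1 hu).1⟩
  have : (#(nbrF G y ∩ S) : ℝ) ≤ #(S \ cl G X A) := by exact_mod_cast card_le_card hsub
  linarith [(mem_filter.1 hy).2]

theorem card_nbr_sdiff_manyNbrsIn_le (hreg : IsRegularDeg G d) (hWY : nbr G A ⊆ Y)
    (hCS : cl G X A ⊆ S) (hd : 2 * nbrExcess G X A * (nbrExcess G X A + 1) < d) :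
    (#(nbr G A \ manyNbrsIn G Y S (2 * nbrExcess G X A)) : ℝ) ≤ nbrExcess G X A + 1 := by
  set t := nbrExcess G X A
  have hB : (#(nbr G A \ manyNbrsIn G Y S (2 * t)) : ℝ) * (d - 2 * t) ≤ d * t :=
    card_mul_sub_le_of_card_inter_cl_le hreg sdiff_subset fun y hy => by
      obtain ⟨hyW, hy⟩ := mem_sdiff.1 hy
      have hS : (#(nbrF G y ∩ S) : ℝ) ≤ 2 * t :=
        not_lt.1 fun h => hy (mem_filter.2 ⟨hWY hyW, h⟩)
      exact le_trans (by exact_mod_cast card_le_card (inter_subset_inter subset_rfl hCS)) hS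
  by_contra! h
  nlinarith [mul_lt_mul_of_pos_right h (by nlinarith : (0 : ℝ) < d - 2 * t)]

theorem exists_card_nbrF_sdiff_union_biUnion_le {θ : ℝ} (hθ : 0 ≤ θ) {q : ℕ}
    (hq : (#(nbr G A \ T) : ℝ) < q * max θ 1) :
    ∃ L ⊆ cl G X A, #L ≤ q ∧
      ∀ x ∈ cl G X A, (#(nbrF G x \ (T ∪ L.biUnion (nbrF G))) : ℝ) ≤ θ := by
  refine exists_card_le_of_greedy (nbrF G) (nbr G A \ T) _ _ hq fun L _ hL => ?_
  push Not at hL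
  obtain ⟨x, hx, hxθ⟩ := hL
  refine ⟨x, hx, (max_one_le_of_lt_natCast hθ hxθ).trans ?_⟩
  refine Nat.cast_le.2 (card_le_card fun u hu => ?_)
  simp only [mem_sdiff, mem_union, mem_inter, not_or] at hu ⊢
  exact ⟨hu.1, ⟨nbrF_subset_nbr_of_mem_cl hx hu.1, hu.2.1⟩, hu.2.2⟩

theorem exists_card_nbrF_inter_sdiff_biUnion_le {θ : ℝ} (hθ : 0 ≤ θ) {q : ℕ}
    (hq : (#(S \ cl G X A) : ℝ) < q * max θ 1) :
    ∃ L ⊆ Y \ nbr G A, #L ≤ q ∧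
      ∀ y ∈ Y \ nbr G A, (#(nbrF G y ∩ (S \ L.biUnion (nbrF G))) : ℝ) ≤ θ := by
  refine exists_card_le_of_greedy (nbrF G) (S \ cl G X A) _ _ hq fun L _ hL => ?_
  push Not at hL
  obtain ⟨y, hy, hyθ⟩ := hL
  refine ⟨y, hy, (max_one_le_of_lt_natCast hθ hyθ).trans ?_⟩
  refine Nat.cast_le.2 (card_le_card fun u hu => ?_)
  have hyC := disjoint_left.1 (disjoint_nbrF_cl (X := X) (mem_sdiff.1 hy).2)
  simp only [mem_sdiff, mem_inter] at hu ⊢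
  exact ⟨hu.1, ⟨hu.2.1, hyC hu.1⟩, hu.2.2⟩

theorem exists_thinnedT (hreg : IsRegularDeg G d) {F : Finset V}
    (hess : EssentialSet G X d A F) (hWY : nbr G A ⊆ Y) {γ' : ℝ} (hγ' : 0 < γ')
    {n p q th : ℕ} (hn : 0 < n) (hW : #(nbr G A) ≤ n) (hC : #(cl G X A) ≤ n)
    (hth : (th : ℝ) = nbrExcess G X A) (hp : 4 * n ^ 2 < p * d ^ 2)
    (ht : 0 ≤ nbrExcess G X A) (hd : 2 * (nbrExcess G X A + 1) ^ 2 < d)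
    (hq : nbrExcess G X A + 1 < q * max (γ' * nbrExcess G X A) 1) :
    ∃ L₁ L₂ : Finset V, #L₁ ≤ p ∧ #L₂ ≤ q ∧
      thinnedT G X Y F d th L₁ L₂ ⊆ nbr G A ∧
      Wbig G d A ⊆ thinnedT G X Y F d th L₁ L₂ ∧
      ∀ x ∈ cl G X A,
        (#(nbrF G x \ thinnedT G X Y F d th L₁ L₂) : ℝ) ≤ γ' * nbrExcess G X A := by
  set t := nbrExcess G X A
  have hdR : (0 : ℝ) < d := by nlinarith
  obtain ⟨L₁, hL₁C, hL₁p, hcov⟩ :=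
    exists_card_nbr_sdiff_biUnion_le hreg hn hW hC (by nlinarith) hp
  set T₀ := F ∪ L₁.biUnion (nbrF G)
  set S₁ := fewNbrsOutside G X T₀ (d / 2)
  have hT₀ : T₀ ⊆ nbr G A := union_subset hess.1 (biUnion_nbrF_subset_nbr hL₁C)
  have hCS₁ : cl G X A ⊆ S₁ := fun x hx => mem_filter.2 ⟨cl_subset hx, le_trans
    (Nat.cast_le.2 (card_le_card (sdiff_subset_sdiff (nbrF_subset_nbr_of_mem_cl hx)
      subset_union_right))) hcov⟩
  have hjunk : (#(S₁ \ cl G X A) : ℝ) ≤ 2 * t := by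
    have h := card_sdiff_cl_mul_sub_le (X := X) (S := S₁) hreg hT₀ fun x hx =>
      (mem_filter.1 hx).2
    nlinarith
  set T₁ := T₀ ∪ manyNbrsIn G Y S₁ (2 * th)
  have hT₁ : T₁ ⊆ nbr G A :=
    union_subset hT₀ (manyNbrsIn_subset_nbr (by rw [hth]; exact hjunk))
  have hWT₁ : (#(nbr G A \ T₁) : ℝ) ≤ t + 1 :=
    le_trans (Nat.cast_le.2 (card_le_card (sdiff_subset_sdiff subset_rfl subset_union_right)))
      (by rw [hth]; exact card_nbr_sdiff_manyNbrsIn_le hreg hWY hCS₁ (by nlinarith))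
  obtain ⟨L₂, hL₂C, hL₂q, hthin⟩ :=
    exists_card_nbrF_sdiff_union_biUnion_le (T := T₁) (by positivity) (hWT₁.trans_lt hq)
  exact ⟨L₁, L₂, hL₁p, hL₂q, union_subset hT₁ (biUnion_nbrF_subset_nbr hL₂C),
    hess.2.1.trans (subset_union_left.trans (subset_union_left.trans subset_union_left)), hthin⟩

theorem exists_isContainer_prunedContainer (hreg : IsRegularDeg G d) {γ' : ℝ} (hγ' : 0 < γ')
    {q : ℕ} (hT : T ⊆ nbr G A) (hWbig : Wbig G d A ⊆ T)
    (hthin : ∀ x ∈ cl G X A, (#(nbrF G x \ T) : ℝ) ≤ γ' * nbrExcess G X A)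
    (ht : 0 ≤ nbrExcess G X A) (hd : γ' * nbrExcess G X A * (nbrExcess G X A + 1) < d)
    (hq : nbrExcess G X A + 1 < q * max (γ' * nbrExcess G X A) 1) :
    ∃ L, #L ≤ q ∧ IsContainer G X Y d γ' A
      (prunedContainer G X Y T (γ' * nbrExcess G X A) L).1
      (prunedContainer G X Y T (γ' * nbrExcess G X A) L).2 := by
  set t := nbrExcess G X A
  set S₀ := fewNbrsOutside G X T (γ' * t)
  have hCS₀ : cl G X A ⊆ S₀ := fun x hx => mem_filter.2 ⟨cl_subset hx, hthin x hx⟩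
  have hjunk : (#(S₀ \ cl G X A) : ℝ) ≤ t + 1 := by
    have h := card_sdiff_cl_mul_sub_le (X := X) (S := S₀) hreg hT fun x hx =>
      (mem_filter.1 hx).2
    by_contra! h'
    nlinarith [mul_lt_mul_of_pos_right h' (by nlinarith : (0 : ℝ) < d - γ' * t)]
  obtain ⟨L, hLY, hLq, hhub⟩ :=
    exists_card_nbrF_inter_sdiff_biUnion_le (S := S₀) (by positivity) (hjunk.trans_lt hq)
  refine ⟨L, hLq, fun x hx => mem_sdiff.2 ⟨hCS₀ hx, fun hxL => ?_⟩,
    hWbig.trans subset_union_left, union_subset hT fun y hy => ?_, fun v hv => ?_,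
    fun v hv => ?_⟩
  · obtain ⟨y, hy, hxy⟩ := mem_biUnion.1 hxL
    exact disjoint_left.1 (disjoint_nbrF_cl (mem_sdiff.1 (hLY hy)).2) hxy hx
  · obtain ⟨hyY, hy⟩ := mem_filter.1 hy
    by_contra hyW
    exact (hhub y (mem_sdiff.2 ⟨hyY, hyW⟩)).not_gt hy
  · refine le_trans ?_ (mem_filter.1 (mem_sdiff.1 hv).1).2
    exact Nat.cast_le.2 (card_le_card fun u hu =>
      mem_sdiff.2 ⟨(mem_inter.1 hu).1, fun huT => (mem_sdiff.1 (mem_inter.1 hu).2).2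
        (mem_union_left _ huT)⟩)
  · obtain ⟨hvY, hvT⟩ := mem_sdiff.1 hv
    exact not_lt.1 fun h => hvT (mem_union_right _ (mem_filter.2 ⟨hvY, h⟩))

end Construction

theorem exists_isContainer {G : SimpleGraph V} {X Y A F : Finset V} {d : ℕ}
    (hbip : IsBipartiteWith G X Y) (hreg : IsRegularDeg G d) (hA : A ⊆ X)
    (hess : EssentialSet G X d A F) {γ' : ℝ} (hγ' : 0 < γ') {n p q : ℕ} (hn : 0 < n)
    (hX : #X = n) (hY : #Y = n) (hp : 4 * n ^ 2 < p * d ^ 2) (hq : 1 / γ' + 2 ≤ q)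
    (hd : (2 + γ') * (nbrExcess G X A + 1) ^ 2 < d) :
    ∃ th ≤ n, ∃ L₁ L₂ L₃ : Finset V, #L₁ ≤ p ∧ #L₂ ≤ q ∧ #L₃ ≤ q ∧
      IsContainer G X Y d γ' A
        (prunedContainer G X Y (thinnedT G X Y F d th L₁ L₂) (γ' * th) L₃).1
        (prunedContainer G X Y (thinnedT G X Y F d th L₁ L₂) (γ' * th) L₃).2 := by
  have hdpos : 0 < d := by
    have : (0 : ℝ) < d := lt_of_le_of_lt (by positivity) hd
    exact_mod_cast this
  have ht := nbrExcess_nonneg (X := X) (A := A) hreg hdpos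
  have hWY := nbr_subset_of_isBipartiteWith hbip hA
  have hW : #(nbr G A) ≤ n := hY ▸ card_le_card hWY
  have hCW : #(cl G X A) ≤ #(nbr G A) := by
    have : (#(cl G X A) : ℝ) ≤ #(nbr G A) := sub_nonneg.1 ht
    exact_mod_cast this
  have hth : ((#(nbr G A) - #(cl G X A) : ℕ) : ℝ) = nbrExcess G X A := Nat.cast_sub hCW
  have hq' := add_one_lt_mul_max (t := nbrExcess G X A) hγ' hq
  obtain ⟨L₁, L₂, hL₁, hL₂, hT, hWbig, hthin⟩ := exists_thinnedT hreg hess hWY hγ' hn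
    hW (hX ▸ card_le_card cl_subset) hth hp ht (by nlinarith) hq'
  obtain ⟨L₃, hL₃, hcont⟩ := exists_isContainer_prunedContainer (Y := Y) hreg hγ' hT hWbig
    hthin ht (by nlinarith) hq'
  exact ⟨_, (Nat.sub_le _ _).trans hW, L₁, L₂, L₃, hL₁, hL₂, hL₃, hth ▸ hcont⟩

def containerFamily (G : SimpleGraph V) (X Y F : Finset V) (d : ℕ) (γ' : ℝ) (n r : ℕ) :
    Finset (Finset V × Finset V) :=
  let small := (univ : Finset (Finset V)).filter fun L => #L ≤ r
  (range (n + 1) ×ˢ small ×ˢ small ×ˢ small).image fun z =>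
    prunedContainer G X Y (thinnedT G X Y F d z.1 z.2.1 z.2.2.1) (γ' * z.1) z.2.2.2
theorem card_filter_card_le_le (r : ℕ) :
    #((univ : Finset (Finset V)).filter fun L => #L ≤ r) ≤
      (r + 1) * (Fintype.card V + 1) ^ r := by
  calc _ ≤ #((range (r + 1)).biUnion fun i => powersetCard i (univ : Finset V)) :=
        card_le_card fun L hL => mem_biUnion.2 ⟨#L,
          mem_range.2 (Nat.lt_succ_of_le (mem_filter.1 hL).2),
          mem_powersetCard.2 ⟨subset_univ _, rfl⟩⟩
    _ ≤ ∑ i ∈ range (r + 1), #(powersetCard i (univ : Finset V)) := card_biUnion_le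
    _ ≤ ∑ _i ∈ range (r + 1), (Fintype.card V + 1) ^ r := sum_le_sum fun i hi => by
        rw [card_powersetCard, card_univ]
        exact (Nat.choose_le_pow _ _).trans ((Nat.pow_le_pow_left (Nat.le_succ _) _).trans
          (Nat.pow_le_pow_right (Nat.succ_pos _) (Nat.lt_succ_iff.1 (mem_range.1 hi))))
    _ = _ := by rw [sum_const, card_range, smul_eq_mul]

theorem card_containerFamily_le {G : SimpleGraph V} {X Y F : Finset V} {d : ℕ} {γ' : ℝ}
    {n r : ℕ} (hV : Fintype.card V = 2 * n) (hr : r + 1 ≤ n) (hn : 3 ≤ n) :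
    #(containerFamily G X Y F d γ' n r) ≤ n ^ (6 * r + 5) := by
  set small := (univ : Finset (Finset V)).filter fun L => #L ≤ r
  have hsmall : #small ≤ n ^ (2 * r + 1) := by
    refine (card_filter_card_le_le r).trans ?_
    rw [hV, pow_succ, pow_mul, mul_comm]
    exact Nat.mul_le_mul (Nat.pow_le_pow_left (by nlinarith) r) hr
  calc _ ≤ #(range (n + 1) ×ˢ small ×ˢ small ×ˢ small) := card_image_le
    _ = (n + 1) * (#small * (#small * #small)) := by simp only [card_product, card_range]
    _ ≤ n ^ 2 * (n ^ (2 * r + 1) * (n ^ (2 * r + 1) * n ^ (2 * r + 1))) := by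
        gcongr
        nlinarith
    _ = n ^ (6 * r + 5) := by ring

theorem eventually_mul_sq_log_pow_four_add_one_lt (c : ℝ) {δ : ℝ} (hδ : 0 < δ) :
    ∀ᶠ n : ℕ in Filter.atTop, c * (Real.log n ^ 4 + 1) ^ 2 < δ * n / 2 := by
  have ho : (fun x : ℝ => c * (Real.log x ^ 4 + 1) ^ 2) =o[Filter.atTop] id := by
    have h : (fun x : ℝ => c * (Real.log x ^ 4 + 1) ^ 2)
        = fun x => c * Real.log x ^ 8 + 2 * c * Real.log x ^ 4 + c := by
      funext x
      ring
    rw [h]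
    exact ((Real.isLittleO_pow_log_id_atTop.const_mul_left c).add
      (Real.isLittleO_pow_log_id_atTop.const_mul_left _)).add
      (Asymptotics.isLittleO_const_id_atTop c)
  have hev := (ho.def (by positivity : (0 : ℝ) < δ / 4)).and (Filter.eventually_gt_atTop 0)
  have hreal : ∀ᶠ x : ℝ in Filter.atTop, c * (Real.log x ^ 4 + 1) ^ 2 < δ * x / 2 :=
    hev.mono fun x ⟨hx, hx0⟩ => by
      rw [Real.norm_eq_abs, id, Real.norm_eq_abs, abs_of_pos hx0] at hx
      linarith [le_abs_self (c * (Real.log x ^ 4 + 1) ^ 2), mul_pos hδ hx0]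
  exact tendsto_natCast_atTop_atTop.eventually hreal

theorem four_mul_sq_lt_mul_sq {δ : ℝ} (hδ : 0 < δ) {n d p : ℕ} (hn : 0 < n)
    (hp : 16 / δ ^ 2 < p) (hd : δ * n / 2 ≤ d) : 4 * n ^ 2 < p * d ^ 2 := by
  have hnR : (0 : ℝ) < n := by exact_mod_cast hn
  have hmul : 16 / δ ^ 2 * (δ * n / 2) ^ 2 = 4 * (n : ℝ) ^ 2 := by field_simp; ring
  have : (4 : ℝ) * n ^ 2 < p * d ^ 2 := by
    calc (4 : ℝ) * n ^ 2 = 16 / δ ^ 2 * (δ * n / 2) ^ 2 := hmul.symm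
      _ < p * (δ * n / 2) ^ 2 := mul_lt_mul_of_pos_right hp (by positivity)
      _ ≤ p * d ^ 2 := by gcongr
  exact_mod_cast this

/-- for each `δ ∈ (0,1)` and `γ' > 0` there is `K = K(δ,γ')` such
that for all sufficiently large `n`, in a `⌊δn⌋`-regular bipartite graph with
parts of size `n`, for every `F ⊆ Y` there is a family `𝒞 ⊆ 2^X × 2^Y` with
`|𝒞| ≤ n^K` such that every `A ⊆ X` with `|N(A)| - |[A]| ≤ log⁴ n` for which `F`
is an essential set has a `γ'`-container in `𝒞`. -/
theorem stmt_16 (δ : ℝ) (hδ : δ ∈ Set.Ioo (0:ℝ) 1) (γ' : ℝ) (hγ' : 0 < γ') :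
    ∃ K : ℕ, ∃ N0 : ℕ,
      ∀ (V : Type) [Fintype V] [DecidableEq V] (G : SimpleGraph V)
        (X Y : Finset V) (n d : ℕ),
        N0 ≤ n → d = ⌊δ * (n : ℝ)⌋₊ →
        X.card = n → Y.card = n → IsBipartiteWith G X Y → IsRegularDeg G d →
        ∀ F ⊆ Y, ∃ 𝒞 : Finset (Finset V × Finset V), 𝒞.card ≤ n ^ K ∧
          ∀ A ⊆ X,
            ((nbr G A).card : ℝ) - ((cl G X A).card : ℝ) ≤ (Real.log n) ^ 4 →
            EssentialSet G X d A F →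
            ∃ p ∈ 𝒞, IsContainer G X Y d γ' A p.1 p.2 := by
  obtain ⟨hδ, -⟩ := hδ
  obtain ⟨p, hp⟩ := exists_nat_gt (16 / δ ^ 2)
  obtain ⟨q, hq⟩ := exists_nat_ge (1 / γ' + 2)
  obtain ⟨N0, hN0⟩ := Filter.eventually_atTop.1 ((Filter.eventually_ge_atTop (p + q + 3)).and
    (((tendsto_natCast_atTop_atTop.const_mul_atTop hδ).eventually_ge_atTop (2 : ℝ)).and
      (eventually_mul_sq_log_pow_four_add_one_lt (2 + γ') hδ)))
  refine ⟨6 * (p + q) + 5, N0, fun V _ _ G X Y n d hN hd hX hY hbip hreg F _ => ?_⟩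
  obtain ⟨hn, hδn, hlog⟩ := hN0 n hN
  have hdn : δ * n / 2 ≤ d := by rw [hd]; linarith [Nat.lt_floor_add_one (δ * n)]
  have hV : Fintype.card V = 2 * n := by
    rw [← card_univ, ← hbip.2.1, card_union_of_disjoint hbip.1, hX, hY, two_mul]
  have hd0 : 0 < d := by exact_mod_cast (by linarith : (0 : ℝ) < d)
  refine ⟨containerFamily G X Y F d γ' n (p + q),
    card_containerFamily_le hV (by omega) (by omega), fun A hA ht hess => ?_⟩
  have hd' : (2 + γ') * (nbrExcess G X A + 1) ^ 2 < d := by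
    have := nbrExcess_nonneg (X := X) (A := A) hreg hd0
    have : (nbrExcess G X A + 1) ^ 2 ≤ (Real.log n ^ 4 + 1) ^ 2 := by gcongr; exact ht
    nlinarith
  obtain ⟨th, hth, L₁, L₂, L₃, h₁, h₂, h₃, hcont⟩ := exists_isContainer hbip hreg hA
    hess hγ' (by omega) hX hY (four_mul_sq_lt_mul_sq hδ (by omega) hp hdn) hq hd'
  refine ⟨_, mem_image.2 ⟨(th, L₁, L₂, L₃), ?_, rfl⟩, hcont⟩
  simp only [mem_product, mem_range, mem_filter, mem_univ, true_and]
  omega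
end
end
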